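/- For every τ in the upper half-plane ℍ, with all theta constants evaluated at (0,τ): θ[1;1/4]⁴ - θ[1;3/4]⁴ - θ[1;1/2]·θ[1;0]³ = 0. -/
import Mathlib

open Complex

/-- The theta function with characteristics `θ[ε; ε'](ζ, τ)`. -/
noncomputable def thetaChar (e e' : ℝ) (z τ : ℂ) : ℂ :=
  ∑' n : ℤ, Complex.exp (2 * Real.pi * I *
    ((1/2) * ((n : ℂ) + (e : ℂ)/2)^2 * τ + ((n : ℂ) + (e : ℂ)/2) * (z + (e' : ℂ)/2)))

/-- The derivative theta constant `θ'[ε; ε'](0, τ) = ∂θ[ε;ε'](ζ,τ)/∂ζ |_{ζ=0}`. -/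
noncomputable def thetaCharDeriv (e e' : ℝ) (τ : ℂ) : ℂ :=
  deriv (fun z => thetaChar e e' z τ) 0

namespace ThetaAux

noncomputable def T (x τ : ℂ) (n : ℤ) : ℂ :=
  Complex.exp (2 * Real.pi * I * ((1/2) * ((n : ℂ) + 1/2)^2 * τ + ((n : ℂ) + 1/2) * x))

noncomputable def ET (z τ : ℂ) (k : ℤ) : ℂ :=
  Complex.exp (2 * Real.pi * I * ((k : ℂ)^2 * τ + (k : ℂ) * z))

noncomputable def OT (z τ : ℂ) (k : ℤ) : ℂ :=
  Complex.exp (2 * Real.pi * I * ((2*(k : ℂ)+1)^2 * τ / 4 + (2*(k : ℂ)+1) * z / 2))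

variable {τ : ℂ}

lemma sumT (hτ : 0 < τ.im) (x : ℂ) : Summable (T x τ) := by
  have h := (summable_jacobiTheta₂_term_iff (x + τ/2) τ).mpr hτ
  have := h.mul_left (Complex.exp (Real.pi * I * τ / 4 + Real.pi * I * x))
  refine this.congr fun n => ?_
  rw [jacobiTheta₂_term, ← Complex.exp_add, T]
  congr 1
  ring

lemma sumE (hτ : 0 < τ.im) (z : ℂ) : Summable (ET z τ) := by
  have h2 : 0 < (2 * τ).im := by simp [Complex.mul_im]; linarith
  have h := (summable_jacobiTheta₂_term_iff z (2 * τ)).mpr h2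
  refine h.congr fun k => ?_
  rw [jacobiTheta₂_term, ET]
  congr 1
  ring

lemma sumO (hτ : 0 < τ.im) (z : ℂ) : Summable (OT z τ) := by
  have h2 : 0 < (2 * τ).im := by simp [Complex.mul_im]; linarith
  have h := (summable_jacobiTheta₂_term_iff (z + τ) (2 * τ)).mpr h2
  have := h.mul_left (Complex.exp (Real.pi * I * τ / 2 + Real.pi * I * z))
  refine this.congr fun k => ?_
  rw [jacobiTheta₂_term, ← Complex.exp_add, OT]
  congr 1
  ring

lemma normT (hτ : 0 < τ.im) (x : ℂ) : Summable (fun n => ‖T x τ n‖) :=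
  summable_norm_iff.mpr (sumT hτ x)

lemma normE (hτ : 0 < τ.im) (z : ℂ) : Summable (fun k => ‖ET z τ k‖) :=
  summable_norm_iff.mpr (sumE hτ z)

lemma normO (hτ : 0 < τ.im) (z : ℂ) : Summable (fun k => ‖OT z τ k‖) :=
  summable_norm_iff.mpr (sumO hτ z)

/-- The key splitting: the range decomposition of ℤ × ℤ. -/
lemma split (hτ : 0 < τ.im) (x y : ℂ) :
    (∑' n : ℤ, T x τ n) * (∑' n : ℤ, T y τ n)
      = (∑' k : ℤ, ET (x+y) τ k) * (∑' k : ℤ, OT (x-y) τ k)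
      + (∑' k : ℤ, OT (x+y) τ k) * (∑' k : ℤ, ET (x-y) τ k) := by
  rw [tsum_mul_tsum_of_summable_norm (normT hτ x) (normT hτ y),
    tsum_mul_tsum_of_summable_norm (normE hτ (x+y)) (normO hτ (x-y)),
    tsum_mul_tsum_of_summable_norm (normO hτ (x+y)) (normE hτ (x-y))]
  set g : ℤ × ℤ → ℂ := fun p => T x τ p.1 * T y τ p.2 with hg_def
  have hg : Summable g := summable_mul_of_summable_norm (normT hτ x) (normT hτ y)
  set i₁ : ℤ × ℤ → ℤ × ℤ := fun p => (p.1 + p.2, p.1 - p.2 - 1) with hi₁def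
  set i₂ : ℤ × ℤ → ℤ × ℤ := fun p => (p.1 + p.2, p.1 - p.2) with hi₂def
  have hinj₁ : Function.Injective i₁ := by
    rintro ⟨a, b⟩ ⟨c, d⟩ h
    simp only [hi₁def, Prod.mk.injEq] at h
    have : a = c ∧ b = d := by omega
    simp [this.1, this.2]
  have hinj₂ : Function.Injective i₂ := by
    rintro ⟨a, b⟩ ⟨c, d⟩ h
    simp only [hi₂def, Prod.mk.injEq] at h
    have : a = c ∧ b = d := by omega
    simp [this.1, this.2]
  have h1 : (fun p : ℤ × ℤ => ET (x+y) τ p.1 * OT (x-y) τ p.2) = g ∘ i₁ := by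
    funext ⟨k, l⟩
    simp only [hg_def, hi₁def, Function.comp_apply, ET, OT, T, ← Complex.exp_add]
    congr 1
    push_cast
    ring
  have h2 : (fun p : ℤ × ℤ => OT (x+y) τ p.1 * ET (x-y) τ p.2) = g ∘ i₂ := by
    funext ⟨k, l⟩
    simp only [hg_def, hi₂def, Function.comp_apply, ET, OT, T, ← Complex.exp_add]
    congr 1
    push_cast
    ring
  rw [h1, h2]
  have hs₁ : Summable (g ∘ i₁) := hg.comp_injective hinj₁
  have hs₂ : Summable (g ∘ i₂) := hg.comp_injective hinj₂
  have hr₂ : Set.range i₂ = {p : ℤ × ℤ | Even (p.1 + p.2)} := by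
    ext ⟨m, n⟩
    simp only [Set.mem_range, Set.mem_setOf_eq, hi₂def, Prod.mk.injEq, Prod.exists, Even]
    constructor
    · rintro ⟨k, l, hk, hl⟩; exact ⟨k, by omega⟩
    · rintro ⟨r, hr⟩; exact ⟨r, r - n, by omega, by omega⟩
  have hr₁ : Set.range i₁ = {p : ℤ × ℤ | Even (p.1 + p.2)}ᶜ := by
    ext ⟨m, n⟩
    simp only [Set.mem_range, Set.mem_compl_iff, Set.mem_setOf_eq, hi₁def, Prod.mk.injEq,
      Prod.exists, Even, not_exists]
    constructor
    · rintro ⟨k, l, hk, hl⟩ r; omega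
    · intro h
      have := h ((m + n + 1) / 2)
      refine ⟨(m + n + 1) / 2, (m - n - 1) / 2, by omega, by omega⟩
  have hcompl : IsCompl (Set.range i₁) (Set.range i₂) := by
    rw [hr₁, hr₂]
    exact isCompl_compl.symm
  have H : HasSum g ((∑' p : ℤ × ℤ, g (i₁ p)) + (∑' p : ℤ × ℤ, g (i₂ p))) :=
    (hinj₁.hasSum_range_iff.2 hs₁.hasSum).add_isCompl hcompl
      (hinj₂.hasSum_range_iff.2 hs₂.hasSum)
  exact H.tsum_eq

lemma E_symm : (∑' k : ℤ, ET ((3:ℂ)/4) τ k) = ∑' k : ℤ, ET ((1:ℂ)/4) τ k := by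
  rw [← (Equiv.neg ℤ).tsum_eq (ET ((1:ℂ)/4) τ)]
  refine tsum_congr fun k => ?_
  simp only [Equiv.neg_apply, ET]
  have : (2 * ↑Real.pi * I * ((k : ℂ)^2 * τ + (k : ℂ) * (3/4)))
      = (2 * ↑Real.pi * I * (((-k : ℤ) : ℂ)^2 * τ + ((-k : ℤ) : ℂ) * (1/4))) + k * (2 * ↑Real.pi * I) := by
    push_cast
    ring
  rw [this, Complex.exp_add, Complex.exp_int_mul_two_pi_mul_I, mul_one]

lemma O_symm : (∑' k : ℤ, OT ((3:ℂ)/4) τ k) = -∑' k : ℤ, OT ((1:ℂ)/4) τ k := by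
  rw [← (Equiv.subLeft (-1 : ℤ)).tsum_eq (OT ((1:ℂ)/4) τ), ← tsum_neg]
  refine tsum_congr fun k => ?_
  simp only [Equiv.subLeft_apply, OT]
  have : (2 * ↑Real.pi * I * ((2*(k : ℂ)+1)^2 * τ / 4 + (2*(k : ℂ)+1) * (3/4) / 2))
      = (2 * ↑Real.pi * I * ((2*((-1 - k : ℤ) : ℂ)+1)^2 * τ / 4 + (2*((-1 - k : ℤ) : ℂ)+1) * (1/4) / 2))
        + ((k : ℂ) * (2 * ↑Real.pi * I) + Real.pi * I) := by
    push_cast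
    ring
  rw [this, Complex.exp_add, Complex.exp_add, Complex.exp_int_mul_two_pi_mul_I, one_mul,
    Complex.exp_pi_mul_I]
  ring

lemma theta_eq (e' : ℝ) : thetaChar 1 e' 0 τ = ∑' n : ℤ, T ((e' : ℂ)/2) τ n := by
  refine tsum_congr fun n => ?_
  rw [T]
  congr 1
  push_cast
  ring

end ThetaAux

open ThetaAux in
theorem theta_constant_identity_three (τ : ℂ) (hτ : 0 < τ.im) :
    thetaChar 1 (1/4) 0 τ ^ 4 - thetaChar 1 (3/4) 0 τ ^ 4
      - thetaChar 1 (1/2) 0 τ * thetaChar 1 0 0 τ ^ 3 = 0 := by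
  have e1 : (1:ℂ)/8 + 1/8 = 1/4 := by norm_num
  have e2 : (1:ℂ)/8 - 1/8 = 0 := by norm_num
  have e3 : (3:ℂ)/8 + 3/8 = 3/4 := by norm_num
  have e4 : (3:ℂ)/8 - 3/8 = 0 := by norm_num
  have e5 : (1:ℂ)/4 + 0 = 1/4 := by norm_num
  have e6 : (1:ℂ)/4 - 0 = 1/4 := by norm_num
  have e7 : (0:ℂ) + 0 = 0 := by norm_num
  have e8 : (0:ℂ) - 0 = 0 := by norm_num
  have hAA := split hτ ((1:ℂ)/8) ((1:ℂ)/8)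
  rw [e1, e2] at hAA
  have hBB := split hτ ((3:ℂ)/8) ((3:ℂ)/8)
  rw [e3, e4, E_symm, O_symm] at hBB
  have hCD := split hτ ((1:ℂ)/4) (0:ℂ)
  rw [e5, e6] at hCD
  have hDD := split hτ (0:ℂ) (0:ℂ)
  rw [e7, e8] at hDD
  have c1 : (((1/4 : ℝ) : ℂ))/2 = (1:ℂ)/8 := by norm_num
  have c2 : (((3/4 : ℝ) : ℂ))/2 = (3:ℂ)/8 := by norm_num
  have c3 : (((1/2 : ℝ) : ℂ))/2 = (1:ℂ)/4 := by norm_num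
  have c4 : (((0 : ℝ) : ℂ))/2 = (0:ℂ) := by norm_num
  rw [theta_eq (1/4), theta_eq (3/4), theta_eq (1/2), theta_eq 0, c1, c2, c3, c4]
  set A := ∑' n : ℤ, T ((1:ℂ)/8) τ n
  set B := ∑' n : ℤ, T ((3:ℂ)/8) τ n
  set C := ∑' n : ℤ, T ((1:ℂ)/4) τ n
  set D := ∑' n : ℤ, T (0:ℂ) τ n
  set e := ∑' k : ℤ, ET ((1:ℂ)/4) τ k
  set o := ∑' k : ℤ, OT ((1:ℂ)/4) τ k
  set E0 := ∑' k : ℤ, ET (0:ℂ) τ k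
  set O0 := ∑' k : ℤ, OT (0:ℂ) τ k
  linear_combination (A*A + (e*O0 + o*E0)) * hAA
    - (B*B + (e*O0 - o*E0)) * hBB - (D*D) * hCD - (2*e*o) * hDD
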